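/- Let W be a cyclic word of length n ≥ 3 over a three-letter alphabet {a,b,c} such that (i) no two cyclically adjacent letters are equal, (ii) W contains no cyclic factor of length 4 of the form x y z y with x, y, z pairwise distinct, and (iii) all three letters occur in W. Then n is divisible by 3 and W is, up to cyclic rotation, equal to (abc)^{n/3} or to (acb)^{n/3}. -/

import Mathlib

/-!
If no three consecutive letters are pairwise distinct, the word has period 2 and so misses a
letter. Once a pairwise distinct triple `x y z` occurs, the next letter differs from `z` (no
repetition) and from `y` (no factor `x y z y`), so it is `x`, and `y z x` is again pairwise
distinct: from there on the word is `3`-periodic. Going once round the cycle forces `3 ∣ n`, and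
reading from an occurrence of `a` gives `abc…` or `acb…`.
-/

open Function

theorem Function.Periodic.ext_nat {α : Type*} {f g : ℕ → α} {c : ℕ} (hf : Periodic f c)
    (hg : Periodic g c) (hc : 0 < c) (h : ∀ k < c, f k = g k) : f = g := by
  funext k
  rw [← hf.map_mod_nat, ← hg.map_mod_nat, h _ (Nat.mod_lt k hc)]

namespace CyclicWord

variable {R : Type*} [CommSemiring R] {W : R → Fin 3}

def ThreeDistinctAt (W : R → Fin 3) (i : R) : Prop :=
  W i ≠ W (i + 1) ∧ W (i + 1) ≠ W (i + 2) ∧ W i ≠ W (i + 2)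

theorem fin_three_eq_of_ne {a b c d : Fin 3} (hab : a ≠ b) (hbc : b ≠ c) (hac : a ≠ c)
    (hdb : d ≠ b) (hdc : d ≠ c) : d = a := by
  omega

theorem fin_three_exists_ne (a b : Fin 3) : ∃ c, c ≠ a ∧ c ≠ b := by
  revert a b; decide

theorem fin_three_zero_mem {a b c : Fin 3} (hab : a ≠ b) (hbc : b ≠ c) (hac : a ≠ c) :
    a = 0 ∨ b = 0 ∨ c = 0 := by
  omega

theorem fin_three_eq_one_two_or_eq_two_one {b c : Fin 3} (hb : b ≠ 0) (hc : c ≠ 0) (hbc : b ≠ c) :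
    b = 1 ∧ c = 2 ∨ b = 2 ∧ c = 1 := by
  omega

theorem ThreeDistinctAt.exists_eq_zero {j : R} (hj : ThreeDistinctAt W j) :
    ∃ r : ℕ, W (j + r) = 0 := by
  rcases fin_three_zero_mem hj.1 hj.2.1 hj.2.2 with h | h | h
  exacts [⟨0, by simpa using h⟩, ⟨1, by simpa using h⟩, ⟨2, by simpa using h⟩]

section Propagation

variable (h1 : ∀ i, W (i + 1) ≠ W i)
  (h2 : ∀ i, ¬(W i ≠ W (i + 1) ∧ W (i + 1) ≠ W (i + 2) ∧ W i ≠ W (i + 2) ∧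
    W (i + 3) = W (i + 1)))
include h1 h2

theorem ThreeDistinctAt.add_three {i : R} (hi : ThreeDistinctAt W i) :
    W (i + 3) = W i ∧ ThreeDistinctAt W (i + 1) := by
  obtain ⟨h01, h12, h02⟩ := hi
  have hne1 : W (i + 3) ≠ W (i + 1) := fun h => h2 i ⟨h01, h12, h02, h⟩
  have hne2 : W (i + 3) ≠ W (i + 2) := by
    simpa only [add_assoc, two_add_one_eq_three] using h1 (i + 2)
  have h3 : W (i + 3) = W i := fin_three_eq_of_ne h01 h12 h02 hne1 hne2
  refine ⟨h3, ?_, ?_, ?_⟩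
  · rwa [add_assoc, one_add_one_eq_two]
  · rw [add_assoc, add_assoc, one_add_one_eq_two, (by norm_num : (1 : R) + 2 = 3), h3]
    exact h02.symm
  · rw [add_assoc, (by norm_num : (1 : R) + 2 = 3), h3]
    exact h01.symm

theorem ThreeDistinctAt.add_nat {t : R} (ht : ThreeDistinctAt W t) (k : ℕ) :
    ThreeDistinctAt W (t + k) := by
  induction k with
  | zero => simpa using ht
  | succ k ih => simpa only [Nat.cast_succ, add_assoc] using (ih.add_three h1 h2).2

theorem ThreeDistinctAt.periodic {t : R} (ht : ThreeDistinctAt W t) :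
    Periodic (fun k : ℕ => W (t + k)) 3 := by
  intro k
  simpa only [Nat.cast_add, Nat.cast_ofNat, add_assoc] using
    ((ht.add_nat h1 h2 k).add_three h1 h2).1

open Fin.NatCast in
theorem ThreeDistinctAt.eq_natCast_or_eq_two_mul {t : R} (ht : ThreeDistinctAt W t)
    (h0 : W t = 0) :
    (∀ k : ℕ, W (t + k) = (k : Fin 3)) ∨
      (∀ k : ℕ, W (t + k) = ((2 * k : ℕ) : Fin 3)) := by
  have hper := ht.periodic h1 h2
  have hlin : ∀ a : ℕ, Periodic (fun k : ℕ => ((a * k : ℕ) : Fin 3)) 3 := by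
    intro a k
    exact Fin.ext (by simp only [Fin.val_natCast, mul_add, Nat.add_mul_mod_self_right])
  obtain ⟨h01, h12, h02⟩ := ht
  rw [h0] at h01 h02
  rcases fin_three_eq_one_two_or_eq_two_one h01.symm h02.symm h12 with ⟨h1', h2'⟩ | ⟨h1', h2'⟩
  · left
    intro k
    simpa using congrFun (hper.ext_nat (hlin 1) three_pos fun k hk => by
      interval_cases k <;> simp [h0, h1', h2']) k
  · right
    intro k
    exact congrFun (hper.ext_nat (hlin 2) three_pos fun k hk => by
      interval_cases k <;> simp [h0, h1', h2']) k

end Propagation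

theorem exists_threeDistinctAt {n : ℕ} {W : ZMod n → Fin 3} (h1 : ∀ i, W (i + 1) ≠ W i)
    (h3 : ∀ l, ∃ i, W i = l) : ∃ j, ThreeDistinctAt W j := by
  by_contra! hnone
  have hper : Periodic W 2 := fun i => by
    by_contra hne
    refine hnone i ⟨(h1 i).symm, ?_, fun h => hne h.symm⟩
    simpa only [add_assoc, one_add_one_eq_two] using (h1 (i + 1)).symm
  have hval : ∀ i, W i = W 0 ∨ W i = W 1 := by
    intro i
    obtain ⟨m, rfl⟩ := ZMod.intCast_surjective i
    have hm : ((m : ℤ) : ZMod n) = ((m % 2 : ℤ) : ZMod n) + ((m / 2 : ℤ) : ZMod n) * 2 := by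
      conv_lhs => rw [← Int.emod_add_mul_ediv m 2]
      push_cast; ring
    rw [hm, hper.int_mul (m / 2)]
    rcases Int.emod_two_eq_zero_or_one m with h | h <;> simp [h]
  obtain ⟨l, hl0, hl1⟩ := fin_three_exists_ne (W 0) (W 1)
  obtain ⟨i, rfl⟩ := h3 l
  rcases hval i with h | h
  exacts [hl0 h, hl1 h]

theorem ThreeDistinctAt.three_dvd {n : ℕ} {W : ZMod n → Fin 3} {j : ZMod n}
    (hj : ThreeDistinctAt W j) (hper : Periodic (fun k : ℕ => W (j + k)) 3) : 3 ∣ n := by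
  have h := hper.map_mod_nat n
  simp only [ZMod.natCast_self, add_zero] at h
  have : n % 3 = 0 ∨ n % 3 = 1 ∨ n % 3 = 2 := by omega
  rcases this with h3 | h3 | h3 <;> rw [h3] at h
  · exact Nat.dvd_of_mod_eq_zero h3
  · exact absurd (by simpa using h.symm) hj.1
  · exact absurd (by simpa using h.symm) hj.2.2

end CyclicWord

open CyclicWord

open Fin.NatCast in
theorem stmt_3_general (n : ℕ) (W : ZMod n → Fin 3)
    (h1 : ∀ i : ZMod n, W (i + 1) ≠ W i)
    (h2 : ∀ i : ZMod n, ¬(W i ≠ W (i + 1) ∧ W (i + 1) ≠ W (i + 2) ∧ W i ≠ W (i + 2) ∧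
        W (i + 3) = W (i + 1)))
    (h3 : ∀ l : Fin 3, ∃ i : ZMod n, W i = l) :
    3 ∣ n ∧ ∃ t : ZMod n,
      (∀ k : ℕ, W (t + (k : ZMod n)) = (k : Fin 3)) ∨
      (∀ k : ℕ, W (t + (k : ZMod n)) = ((2 * k : ℕ) : Fin 3)) := by
  obtain ⟨j, hj⟩ := exists_threeDistinctAt h1 h3
  obtain ⟨r, hr⟩ := hj.exists_eq_zero
  exact ⟨hj.three_dvd (hj.periodic h1 h2),
    j + r, (hj.add_nat h1 h2 r).eq_natCast_or_eq_two_mul h1 h2 hr⟩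

open Fin.NatCast in
/-- Let `W` be a cyclic word of length `n ≥ 3` over the three-letter alphabet `Fin 3`
(`a = 0`, `b = 1`, `c = 2`) such that (i) no two cyclically adjacent letters are equal,
(ii) `W` contains no cyclic factor of length 4 of the form `x y z y` with `x, y, z`
pairwise distinct, and (iii) all three letters occur in `W`.  Then `3 ∣ n` and `W` is,
up to cyclic rotation, equal to `(abc)^{n/3}` or to `(acb)^{n/3}` (the letter at offset
`k` from the rotation point being `k mod 3`, resp. `2k mod 3`). -/
theorem stmt_3 (n : ℕ) (hn : 3 ≤ n) (W : ZMod n → Fin 3)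
    (h1 : ∀ i : ZMod n, W (i + 1) ≠ W i)
    (h2 : ∀ i : ZMod n, ¬(W i ≠ W (i + 1) ∧ W (i + 1) ≠ W (i + 2) ∧ W i ≠ W (i + 2) ∧
        W (i + 3) = W (i + 1)))
    (h3 : ∀ l : Fin 3, ∃ i : ZMod n, W i = l) :
    3 ∣ n ∧ ∃ t : ZMod n,
      (∀ k : ℕ, W (t + (k : ZMod n)) = (k : Fin 3)) ∨
      (∀ k : ℕ, W (t + (k : ZMod n)) = ((2 * k : ℕ) : Fin 3)) :=
  stmt_3_general n W h1 h2 h3
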